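/- Iterated contraction along a Markov chain: if X_0 → X_1 → ... → X_m is a (possibly non-homogeneous) Markov chain with transition stochastic matrices P_1,...,P_m shared by two pmfs p and p' (which may differ only in the initial distribution of X_0), then d_V(p(X_m), p'(X_m)) ≤ (∏_{k=1}^m d⁺(P_k)) · d_V(p(X_0), p'(X_0)). -/

import Mathlib

/-!
Put `δ = ν - ν'`, a vector of total mass zero. The `ℓ¹` norm of `δP` equals `⟨δ, Pf⟩`, where
`f` is the sign vector of `δP`. The entries of `Pf` are the rows of `P` integrated against `f`,
so any two of them differ by at most `2 d⁺(P)`; and against a vector of mass zero, a function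
whose values spread over an interval of length `ω` integrates to at most `ω/2 · ‖δ‖₁`. Hence
`d_V(νP, ν'P) ≤ d⁺(P) d_V(ν, ν')` whenever `ν` and `ν'` have equal mass, and stochastic
matrices preserve mass, so the bound iterates along the chain.
-/

open Finset

noncomputable def tv {X : Type*} [Fintype X] (p q : X → ℝ) : ℝ :=
  (1/2) * ∑ x, |p x - q x|

def IsPmf {X : Type*} [Fintype X] (p : X → ℝ) : Prop :=
  (∀ x, 0 ≤ p x) ∧ ∑ x, p x = 1

/-- The (upper) diameter of a stochastic matrix: the largest total variation
distance between any two of its rows. -/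
noncomputable def diam {I X : Type*} [Fintype I] [Fintype X] (P : I → X → ℝ) : ℝ :=
  ⨆ i : I, ⨆ j : I, tv (P i) (P j)

/-- Marginal distribution of a (possibly non-homogeneous) Markov chain at time `k`,
with initial distribution `μ` and transition matrices `P`. -/
noncomputable def evolve {X : Type*} [Fintype X] (P : ℕ → X → X → ℝ) (μ : X → ℝ) :
    ℕ → X → ℝ
  | 0 => μ
  | k + 1 => fun x => ∑ y, evolve P μ k y * P k y x

theorem tv_le_diam {I X : Type*} [Fintype I] [Fintype X] (P : I → X → ℝ) (i j : I) :
    tv (P i) (P j) ≤ diam P :=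
  (le_ciSup (Finite.bddAbove_range _) j).trans
    (le_ciSup (f := fun i ↦ ⨆ j, tv (P i) (P j)) (Finite.bddAbove_range _) i)

theorem diam_nonneg {I X : Type*} [Fintype I] [Fintype X] (P : I → X → ℝ) : 0 ≤ diam P :=
  Real.iSup_nonneg fun _ ↦ Real.iSup_nonneg fun _ ↦ by unfold tv; positivity

theorem sum_mul_le_of_sum_eq_zero {ι : Type*} [Fintype ι] {δ h : ι → ℝ} (hδ : ∑ i, δ i = 0)
    {c : ℝ} (hh : ∀ i j, h i - h j ≤ c) : ∑ i, δ i * h i ≤ c / 2 * ∑ i, |δ i| := by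
  cases isEmpty_or_nonempty ι
  · simp
  obtain ⟨imax, himax⟩ := Finite.exists_max h
  obtain ⟨imin, himin⟩ := Finite.exists_min h
  -- centring `h` at the midpoint of its range costs nothing since `∑ δ = 0`
  set t := (h imax + h imin) / 2 with ht
  have hdev : ∀ i, |h i - t| ≤ c / 2 := fun i ↦ abs_le.2
    ⟨by rw [ht]; linarith [himin i, hh imax imin], by rw [ht]; linarith [himax i, hh imax imin]⟩
  calc ∑ i, δ i * h i = ∑ i, δ i * (h i - t) := by
        simp only [mul_sub, sum_sub_distrib, ← sum_mul, hδ, zero_mul, sub_zero]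
    _ ≤ ∑ i, |δ i| * (c / 2) := sum_le_sum fun i _ ↦ (le_abs_self _).trans <| by
        rw [abs_mul]; exact mul_le_mul_of_nonneg_left (hdev i) (abs_nonneg _)
    _ = c / 2 * ∑ i, |δ i| := by rw [← sum_mul, mul_comm]

theorem tv_sum_mul_le_diam_mul_tv {I X : Type*} [Fintype I] [Fintype X] (P : I → X → ℝ)
    {ν ν' : I → ℝ} (hνν' : ∑ i, ν i = ∑ i, ν' i) :
    tv (fun x ↦ ∑ i, ν i * P i x) (fun x ↦ ∑ i, ν' i * P i x) ≤ diam P * tv ν ν' := by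
  set g : X → ℝ := fun x ↦ ∑ i, (ν i - ν' i) * P i x
  set f : X → ℝ := fun x ↦ SignType.sign (g x)
  set h : I → ℝ := fun i ↦ ∑ x, P i x * f x
  have hf : ∀ x, |f x| ≤ 1 := fun x ↦ by
    rcases lt_trichotomy (g x) 0 with hx | hx | hx <;> simp [f, hx]
  have hosc : ∀ i j, h i - h j ≤ 2 * diam P := fun i j ↦ calc
    h i - h j = ∑ x, (P i x - P j x) * f x := by simp only [h, ← sum_sub_distrib, sub_mul]
    _ ≤ ∑ x, |P i x - P j x| := sum_le_sum fun x _ ↦ (le_abs_self _).trans <| by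
        rw [abs_mul]; exact mul_le_of_le_one_right (abs_nonneg _) (hf x)
    _ = 2 * tv (P i) (P j) := by unfold tv; ring
    _ ≤ 2 * diam P := by gcongr; exact tv_le_diam P i j
  have hl1 : ∑ x, |g x| = ∑ i, (ν i - ν' i) * h i := calc
    ∑ x, |g x| = ∑ x, g x * f x := by simp only [f, self_mul_sign]
    _ = ∑ i, (ν i - ν' i) * h i := by simp only [g, h, sum_mul, mul_sum, mul_assoc]; exact sum_comm
  have hbound := sum_mul_le_of_sum_eq_zero (δ := fun i ↦ ν i - ν' i)
    (by rw [sum_sub_distrib, hνν', sub_self]) hosc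
  unfold tv
  simp only [← sum_sub_distrib, ← sub_mul]
  change 1 / 2 * ∑ x, |g x| ≤ _
  linarith

theorem sum_evolve {X : Type*} [Fintype X] {P : ℕ → X → X → ℝ} (hP : ∀ k x, ∑ y, P k x y = 1)
    (μ : X → ℝ) (m : ℕ) : ∑ x, evolve P μ m x = ∑ x, μ x := by
  induction m with
  | zero => rfl
  | succ k ih =>
    simp only [evolve]
    rw [sum_comm]
    simp only [← mul_sum, hP, mul_one, ih]

theorem stmt16 {X : Type*} [Fintype X] (P : ℕ → X → X → ℝ) (μ μ' : X → ℝ)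
    (hP : ∀ k x, IsPmf (P k x)) (hμ : IsPmf μ) (hμ' : IsPmf μ') (m : ℕ) :
    tv (evolve P μ m) (evolve P μ' m) ≤
      (∏ k ∈ Finset.range m, diam (P k)) * tv μ μ' := by
  have hrows : ∀ k x, ∑ y, P k x y = 1 := fun k x ↦ (hP k x).2
  induction m with
  | zero => simp [evolve]
  | succ k ih =>
    have hmass : ∑ x, evolve P μ k x = ∑ x, evolve P μ' k x := by
      rw [sum_evolve hrows, sum_evolve hrows, hμ.2, hμ'.2]
    calc tv (evolve P μ (k + 1)) (evolve P μ' (k + 1))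
        ≤ diam (P k) * tv (evolve P μ k) (evolve P μ' k) := tv_sum_mul_le_diam_mul_tv (P k) hmass
      _ ≤ diam (P k) * ((∏ i ∈ range k, diam (P i)) * tv μ μ') :=
        mul_le_mul_of_nonneg_left ih (diam_nonneg _)
      _ = (∏ i ∈ range (k + 1), diam (P i)) * tv μ μ' := by rw [prod_range_succ]; ring
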